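/- arXiv:2410.10769 — 3 statements merged into one kernel-verified Lean document; each statement's English description precedes it below -/
import Mathlib

section
/- Let t* ∈ (0,∞], let (r,ℓ) be a C¹ solution on [0,t*)×ℝ of the diagonal system ∂ₜr + k(r−ℓ)·∂ₓr = 0, ∂ₜℓ − k(r−ℓ)·∂ₓℓ = 0, with initial data r(0,x) = r₀(x), ℓ(0,x) = ℓ₀(x) = −r₀(x), where r₀ is C¹. Let x₁ : [0,t*)×ℝ → ℝ be C¹ with continuous mixed second partial derivatives, satisfying ∂ₜx₁(t,α) = k(r(t,x₁(t,α)) − ℓ(t,x₁(t,α))) and x₁(0,α) = α; let x₂ be the analogous backward family with ∂ₜx₂(t,β) = −k(r(t,x₂(t,β)) − ℓ(t,x₂(t,β))), x₂(0,β) = β. Then the infinitesimal compression ratios c₁(t,α) := ∂x₁/∂α and c₂(t,β) := ∂x₂/∂β satisfy: c₁(t,α) = √( k(r₀(α) − ℓ(t,x₁(t,α))) / k(2r₀(α)) ) · { 1 + r₀'(α)·√(k(2r₀(α))) · ∫₀ᵗ f( r₀(α) − ℓ(τ, x₁(τ,α)) ) dτ } and c₂(t,β) = √( k(r(t,x₂(t,β))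 − ℓ₀(β)) / k(2r₀(β)) ) · { 1 + ℓ₀'(β)·√(k(2r₀(β))) · ∫₀ᵗ f( r(τ, x₂(τ,β)) − ℓ₀(β) ) dτ }, where f(η) := k'(η)/√(k(η)). -/
/-!
Along a forward characteristic `x₁(·, α)` the invariant `r` is transported, so `r = r₀ α` there and
`η := r - l = r₀ α - l` satisfies `η' = -2 k(η) ∂ₓl`. Differentiating `r(s, x₁(s, α)) = r₀ α` in `α`
gives `∂ₓr · c = r₀'` for `c = ∂x₁/∂α`, and differentiating the integral form of the characteristic
equation under the integral sign (which avoids exchanging `∂ₜ` and `∂_α`) gives the variational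
equation `c' = ∂ₓ[k(r - l)] c = k'(η) (∂ₓr - ∂ₓl) c`. The `∂ₓl`-terms then cancel in
`(c / √k(η))' = r₀' k'(η) / √k(η)`, which integrates to the formula for `c₁`. The reflection
`x ↦ -x` maps `(r, l)` to `(-l, -r)`, another solution, and turns the backward family into a
forward one, which gives `c₂`.
-/

open Filter

/-- The primitive `L` of the wave velocity `Q(ξ) = √(1+ξ²)` with `L 0 = 0`. -/
noncomputable def L (u : ℝ) : ℝ := (u * Real.sqrt (1 + u ^ 2) + Real.arsinh u) / 2

/-- The function `f(η) := k'(η)/√(k(η))`. -/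
noncomputable def fk (k : ℝ → ℝ) (η : ℝ) : ℝ := deriv k η / Real.sqrt (k η)

open Set MeasureTheory Topology intervalIntegral Function

section PartialDerivatives

variable {f X : ℝ → ℝ → ℝ} {I : Set ℝ} {s : ℝ}

theorem DifferentiableOn.hasDerivAt_partial_snd (hf : DifferentiableOn ℝ (uncurry f) (I ×ˢ univ))
    (hs : s ∈ I) (x : ℝ) :
    HasDerivAt (fun y => f s y) (fderivWithin ℝ (uncurry f) (I ×ˢ univ) (s, x) (0, 1)) x := by
  have hline : HasDerivAt (fun y : ℝ => (s, y)) ((0 : ℝ), (1 : ℝ)) x :=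
    (hasDerivAt_const x s).prodMk (hasDerivAt_id x)
  exact hasDerivWithinAt_univ.mp <| (hf (s, x) ⟨hs, trivial⟩).hasFDerivWithinAt
    |>.comp_hasDerivWithinAt x hline.hasDerivWithinAt fun _ _ => ⟨hs, trivial⟩

theorem continuousOn_deriv_partial_snd (hI : UniqueDiffOn ℝ I)
    (hf : ContDiffOn ℝ 1 (uncurry f) (I ×ˢ univ)) :
    ContinuousOn (uncurry fun s x => deriv (fun y => f s y) x) (I ×ˢ univ) := by
  refine ((hf.continuousOn_fderivWithin (hI.prod uniqueDiffOn_univ) le_rfl).clm_apply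
    (continuousOn_const (c := ((0 : ℝ), (1 : ℝ))))).congr ?_
  rintro ⟨s, x⟩ ⟨hs, -⟩
  exact ((hf.differentiableOn one_ne_zero).hasDerivAt_partial_snd hs x).deriv

theorem hasDerivAt_comp_partial_snd
    (hf : DifferentiableOn ℝ (uncurry f) (I ×ˢ univ))
    (hX : DifferentiableOn ℝ (uncurry X) (I ×ˢ univ))
    (hs : s ∈ I) (a : ℝ) :
    HasDerivAt (fun a => f s (X s a))
      (deriv (fun y => f s y) (X s a) * deriv (fun a => X s a) a) a :=
  (hf.hasDerivAt_partial_snd hs _).differentiableAt.hasDerivAt.comp a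
    (hX.hasDerivAt_partial_snd hs a).differentiableAt.hasDerivAt

theorem ContinuousOn.comp_partial_snd (hf : ContinuousOn (uncurry f) (I ×ˢ univ))
    (hX : ContinuousOn (uncurry X) (I ×ˢ univ)) :
    ContinuousOn (uncurry fun s a => f s (X s a)) (I ×ˢ univ) :=
  hf.comp (continuousOn_fst.prodMk hX) fun _ hp => ⟨hp.1, trivial⟩

theorem continuousOn_deriv_comp_mul_deriv (hI : UniqueDiffOn ℝ I)
    (hf : ContDiffOn ℝ 1 (uncurry f) (I ×ˢ univ)) (hX : ContDiffOn ℝ 1 (uncurry X) (I ×ˢ univ)) :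
    ContinuousOn (uncurry fun s a => deriv (fun y => f s y) (X s a) * deriv (fun a => X s a) a)
      (I ×ˢ univ) :=
  ((continuousOn_deriv_partial_snd hI hf).comp_partial_snd hX.continuousOn).mul
    (continuousOn_deriv_partial_snd hI hX)

theorem ContinuousOn.restrict_snd_const {g : ℝ → ℝ → ℝ} (hg : ContinuousOn (uncurry g) (I ×ˢ univ))
    (a : ℝ) : ContinuousOn (fun τ => g τ a) I :=
  hg.comp (continuousOn_id.prodMk continuousOn_const) fun _ hτ => ⟨hτ, trivial⟩

theorem hasDerivAt_comp_curve {γ : ℝ → ℝ} {v : ℝ}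
    (hf : DifferentiableAt ℝ (uncurry f) (s, γ s)) (hγ : HasDerivAt γ v s) :
    HasDerivAt (fun u => f u (γ u))
      (deriv (fun u => f u (γ s)) s + v * deriv (fun y => f s y) (γ s)) s := by
  set D := fderiv ℝ (uncurry f) (s, γ s)
  have hD : HasFDerivAt (uncurry f) D (s, γ s) := hf.hasFDerivAt
  have ht : HasDerivAt (fun u => f u (γ s)) (D (1, 0)) s :=
    (hD.comp_hasDerivAt s ((hasDerivAt_id' s).prodMk (hasDerivAt_const s (γ s))) :)
  have hx : HasDerivAt (fun y => f s y) (D (0, 1)) (γ s) :=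
    (hD.comp_hasDerivAt (γ s) ((hasDerivAt_const (γ s) s).prodMk (hasDerivAt_id' (γ s))) :)
  have hsplit : D (1, v) = D (1, 0) + v * D (0, 1) := by
    rw [← smul_eq_mul, ← D.map_smul, ← D.map_add]
    simp
  rw [ht.deriv, hx.deriv, ← hsplit]
  exact (hD.comp_hasDerivAt s ((hasDerivAt_id' s).prodMk hγ) :)

end PartialDerivatives

section Characteristics

variable {t : ℝ}

theorem transport_eq_along_curve {u : ℝ → ℝ → ℝ} {γ v : ℝ → ℝ}
    (hu : DifferentiableOn ℝ (uncurry u) (Icc 0 t ×ˢ univ)) (hγc : ContinuousOn γ (Icc 0 t))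
    (hγ : ∀ s ∈ Ioo 0 t, HasDerivAt γ (v s) s)
    (htr : ∀ s ∈ Ioo 0 t, deriv (fun τ => u τ (γ s)) s + v s * deriv (fun y => u s y) (γ s) = 0) :
    ∀ s ∈ Icc 0 t, u s (γ s) = u 0 (γ 0) := by
  intro s hs
  have hcont : ContinuousOn (fun τ => u τ (γ τ)) (Icc 0 s) :=
    (hu.continuousOn.comp (continuousOn_id.prodMk hγc) fun _ hτ => ⟨hτ, trivial⟩).mono
      (Icc_subset_Icc_right hs.2)
  have hderiv : ∀ τ ∈ Ioo 0 s, HasDerivAt (fun τ => u τ (γ τ)) 0 τ := by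
    intro τ hτ
    have hτt : τ ∈ Ioo 0 t := ⟨hτ.1, hτ.2.trans_le hs.2⟩
    rw [← htr τ hτt]
    exact hasDerivAt_comp_curve
      (hu.differentiableAt (prod_mem_nhds (Icc_mem_nhds hτt.1 hτt.2) univ_mem)) (hγ τ hτt)
  have := integral_eq_sub_of_hasDerivAt_of_le hs.1 hcont hderiv intervalIntegrable_const
  rw [intervalIntegral.integral_zero] at this
  linarith

theorem hasDerivAt_of_eq_add_integral {c h : ℝ → ℝ} {C : ℝ} (hh : ContinuousOn h (Icc 0 t))
    (hc : ∀ s ∈ Icc 0 t, c s = C + ∫ τ in 0..s, h τ) {s : ℝ} (hs : s ∈ Ioo 0 t) :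
    HasDerivAt c (h s) s := by
  have hint : HasDerivAt (fun u => ∫ τ in 0..u, h τ) (h s) s :=
    integral_hasDerivAt_right
      ((hh.mono (Icc_subset_Icc_right hs.2.le)).intervalIntegrable_of_Icc hs.1.le)
      ((hh.mono Ioo_subset_Icc_self).stronglyMeasurableAtFilter isOpen_Ioo s hs)
      ((hh s (Ioo_subset_Icc_self hs)).continuousAt (Icc_mem_nhds hs.1 hs.2))
  exact (hint.const_add C).congr_of_eventuallyEq (eventually_of_mem (Icc_mem_nhds hs.1 hs.2) hc)

variable {V X : ℝ → ℝ → ℝ}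

theorem hasDerivAt_integral_comp_flow (ht : 0 < t)
    (hV : ContDiffOn ℝ 1 (uncurry V) (Icc 0 t ×ˢ univ))
    (hX : ContDiffOn ℝ 1 (uncurry X) (Icc 0 t ×ˢ univ)) {s : ℝ} (hs : s ∈ Icc 0 t) (α : ℝ) :
    HasDerivAt (fun a => ∫ τ in 0..s, V τ (X τ a))
      (∫ τ in 0..s, deriv (fun y => V τ y) (X τ α) * deriv (fun a => X τ a) α) α := by
  set g : ℝ → ℝ → ℝ := fun τ a => deriv (fun y => V τ y) (X τ a) * deriv (fun a => X τ a) a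
  have hg : ContinuousOn (uncurry g) (Icc 0 t ×ˢ univ) :=
    continuousOn_deriv_comp_mul_deriv (uniqueDiffOn_Icc ht) hV hX
  obtain ⟨B, hB⟩ := (isCompact_Icc.prod (isCompact_closedBall α 1)).exists_bound_of_continuousOn
    (hg.mono (prod_mono_right (subset_univ _)))
  have hIoc : uIoc 0 s ⊆ Icc 0 t := by
    rw [uIoc_of_le hs.1]
    exact Ioc_subset_Icc_self.trans (Icc_subset_Icc_right hs.2)
  have hmeas {h : ℝ → ℝ} (hh : ContinuousOn h (Icc 0 t)) :
      AEStronglyMeasurable h (volume.restrict (uIoc 0 s)) :=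
    (hh.mono hIoc).aestronglyMeasurable measurableSet_uIoc
  have hVX (a : ℝ) : ContinuousOn (fun τ => V τ (X τ a)) (Icc 0 t) :=
    (hV.continuousOn.comp_partial_snd hX.continuousOn).restrict_snd_const a
  refine (hasDerivAt_integral_of_dominated_loc_of_deriv_le (F := fun a τ => V τ (X τ a))
    (F' := fun a τ => g τ a) (bound := fun _ => B)
    (Metric.ball_mem_nhds α one_pos) (Eventually.of_forall fun a => hmeas (hVX a))
    (((hVX α).mono (Icc_subset_Icc_right hs.2)).intervalIntegrable_of_Icc hs.1)
    (hmeas (hg.restrict_snd_const α)) ?_ intervalIntegrable_const ?_).2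
  · exact ae_of_all _ fun τ hτ a ha => hB (τ, a) ⟨hIoc hτ, Metric.ball_subset_closedBall ha⟩
  · exact ae_of_all _ fun τ hτ a _ => hasDerivAt_comp_partial_snd (hV.differentiableOn one_ne_zero)
      (hX.differentiableOn one_ne_zero) (hIoc hτ) a

theorem deriv_flow_eq_one_add_integral (ht : 0 < t)
    (hV : ContDiffOn ℝ 1 (uncurry V) (Icc 0 t ×ˢ univ))
    (hX : ContDiffOn ℝ 1 (uncurry X) (Icc 0 t ×ˢ univ))
    (hXt : ∀ a, ∀ s ∈ Ioo 0 t, HasDerivAt (fun u => X u a) (V s (X s a)) s)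
    (hX0 : ∀ a, X 0 a = a) {s : ℝ} (hs : s ∈ Icc 0 t) (α : ℝ) :
    deriv (fun a => X s a) α =
      1 + ∫ τ in 0..s, deriv (fun y => V τ y) (X τ α) * deriv (fun a => X τ a) α := by
  have hflow : (fun a => X s a) = fun a => a + ∫ τ in 0..s, V τ (X τ a) := by
    funext a
    have hVX : ContinuousOn (fun τ => V τ (X τ a)) (Icc 0 s) :=
      ((hV.continuousOn.comp_partial_snd hX.continuousOn).restrict_snd_const a).mono
        (Icc_subset_Icc_right hs.2)
    rw [integral_eq_sub_of_hasDerivAt_of_le hs.1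
      ((hX.continuousOn.restrict_snd_const a).mono (Icc_subset_Icc_right hs.2))
      (fun τ hτ => hXt a τ ⟨hτ.1, hτ.2.trans_le hs.2⟩) (hVX.intervalIntegrable_of_Icc hs.1), hX0]
    ring
  rw [hflow]
  exact ((hasDerivAt_id α).add (hasDerivAt_integral_comp_flow ht hV hX hs α)).deriv

theorem hasDerivAt_deriv_flow (ht : 0 < t)
    (hV : ContDiffOn ℝ 1 (uncurry V) (Icc 0 t ×ˢ univ))
    (hX : ContDiffOn ℝ 1 (uncurry X) (Icc 0 t ×ˢ univ))
    (hXt : ∀ a, ∀ s ∈ Ioo 0 t, HasDerivAt (fun u => X u a) (V s (X s a)) s)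
    (hX0 : ∀ a, X 0 a = a) (α : ℝ) {s : ℝ} (hs : s ∈ Ioo 0 t) :
    HasDerivAt (fun u => deriv (fun a => X u a) α)
      (deriv (fun y => V s y) (X s α) * deriv (fun a => X s a) α) s :=
  hasDerivAt_of_eq_add_integral
    ((continuousOn_deriv_comp_mul_deriv (uniqueDiffOn_Icc ht) hV hX).restrict_snd_const α)
    (fun _ hτ => deriv_flow_eq_one_add_integral ht hV hX hXt hX0 hτ α) hs

end Characteristics

section CompressionRatio

variable {k c η : ℝ → ℝ} {p : ℝ}

theorem hasDerivAt_div_sqrt_comp {s q : ℝ} (hk : DifferentiableAt ℝ k (η s)) (hks : 0 < k (η s))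
    (hc : HasDerivAt c (deriv k (η s) * (p - q * c s)) s)
    (hη : HasDerivAt η (-(2 * k (η s) * q)) s) :
    HasDerivAt (fun u => c u / √(k (η u))) (p * fk k (η s)) s := by
  have hsqrt : HasDerivAt (fun u => √(k (η u)))
      (deriv k (η s) * -(2 * k (η s) * q) / (2 * √(k (η s)))) s :=
    (hk.hasDerivAt.comp s hη).sqrt hks.ne'
  have hne : √(k (η s)) ≠ 0 := (Real.sqrt_pos.2 hks).ne'
  refine (hc.fun_div hsqrt hne).congr_deriv ?_
  have hsq : √(k (η s)) ^ 2 = k (η s) := Real.sq_sqrt hks.le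
  rw [fk]
  generalize √(k (η s)) = m at hsq hne ⊢
  rw [← hsq]
  field_simp
  ring

theorem eq_of_hasDerivAt_compression {q : ℝ → ℝ} {t : ℝ} (ht : 0 ≤ t) (hk : ContDiff ℝ 1 k)
    (hkpos : ∀ x, 0 < k x) (hcc : ContinuousOn c (Icc 0 t)) (hηc : ContinuousOn η (Icc 0 t))
    (hc : ∀ s ∈ Ioo 0 t, HasDerivAt c (deriv k (η s) * (p - q s * c s)) s)
    (hη : ∀ s ∈ Ioo 0 t, HasDerivAt η (-(2 * k (η s) * q s)) s) :
    c t = √(k (η t) / k (η 0)) * (c 0 + p * √(k (η 0)) * ∫ τ in 0..t, fk k (η τ)) := by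
  have hne : ∀ x, √(k x) ≠ 0 := fun x => (Real.sqrt_pos.2 (hkpos x)).ne'
  have hsqrt : ContinuousOn (fun u => √(k (η u))) (Icc 0 t) :=
    (hk.continuous.comp_continuousOn hηc).sqrt
  have hfk : ContinuousOn (fun u => p * fk k (η u)) (Icc 0 t) :=
    continuousOn_const.mul <| ((hk.continuous_deriv le_rfl).comp_continuousOn hηc).div hsqrt
      fun u _ => hne (η u)
  have hftc := integral_eq_sub_of_hasDerivAt_of_le (f := fun u => c u / √(k (η u))) ht
    (hcc.div hsqrt fun u _ => hne (η u))
    (fun s hs => hasDerivAt_div_sqrt_comp ((hk.differentiable one_ne_zero) _) (hkpos _)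
      (hc s hs) (hη s hs)) (hfk.intervalIntegrable_of_Icc ht)
  rw [intervalIntegral.integral_const_mul] at hftc
  rw [Real.sqrt_div (hkpos _).le]
  have := hne (η 0)
  have := hne (η t)
  field_simp at hftc ⊢
  linear_combination -hftc

end CompressionRatio

section RiemannInvariants

variable {k : ℝ → ℝ} {r l x₁ : ℝ → ℝ → ℝ} {r₀ : ℝ → ℝ} {t : ℝ}

theorem hasDerivAt_forward_compression_ratio (ht : 0 < t) (hk : ContDiff ℝ 1 k)
    (hr : ContDiffOn ℝ 1 (uncurry r) (Icc 0 t ×ˢ univ))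
    (hl : ContDiffOn ℝ 1 (uncurry l) (Icc 0 t ×ˢ univ))
    (hx : ContDiffOn ℝ 1 (uncurry x₁) (Icc 0 t ×ˢ univ))
    (hxt : ∀ a, ∀ s ∈ Ioo 0 t,
      HasDerivAt (fun u => x₁ u a) (k (r s (x₁ s a) - l s (x₁ s a))) s)
    (hx0 : ∀ a, x₁ 0 a = a) (hrx : ∀ a, ∀ s ∈ Icc 0 t, r s (x₁ s a) = r₀ a)
    (α : ℝ) {s : ℝ} (hs : s ∈ Ioo 0 t) :
    HasDerivAt (fun u => deriv (fun a => x₁ u a) α)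
      (deriv k (r₀ α - l s (x₁ s α)) * (deriv r₀ α -
        deriv (fun y => l s y) (x₁ s α) * deriv (fun a => x₁ s a) α)) s := by
  have hs' : s ∈ Icc 0 t := Ioo_subset_Icc_self hs
  have hrd := hr.differentiableOn one_ne_zero
  have hld := hl.differentiableOn one_ne_zero
  have hrc : deriv (fun y => r s y) (x₁ s α) * deriv (fun a => x₁ s a) α = deriv r₀ α :=
    ((hasDerivAt_comp_partial_snd hrd (hx.differentiableOn one_ne_zero) hs' α).congr_of_eventuallyEq
      (Eventually.of_forall fun a => (hrx a s hs').symm)).deriv.symm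
  have hKx : deriv (fun y => k (r s y - l s y)) (x₁ s α) = deriv k (r₀ α - l s (x₁ s α)) *
      (deriv (fun y => r s y) (x₁ s α) - deriv (fun y => l s y) (x₁ s α)) := by
    have hrl : HasDerivAt (fun y => r s y - l s y)
        (deriv (fun y => r s y) (x₁ s α) - deriv (fun y => l s y) (x₁ s α)) (x₁ s α) :=
      (hrd.hasDerivAt_partial_snd hs' _).differentiableAt.hasDerivAt.sub
        (hld.hasDerivAt_partial_snd hs' _).differentiableAt.hasDerivAt
    exact (((hk.differentiable one_ne_zero) _).hasDerivAt.comp_of_eq (x₁ s α) hrl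
      (by rw [hrx α s hs'])).deriv
  have hK : ContDiffOn ℝ 1 (uncurry fun τ y => k (r τ y - l τ y)) (Icc 0 t ×ˢ univ) :=
    hk.comp_contDiffOn (hr.sub hl)
  have hc := hasDerivAt_deriv_flow ht hK hx hxt hx0 α hs
  rw [hKx] at hc
  exact hc.congr_deriv (by rw [← hrc]; ring)

theorem hasDerivAt_sub_l_along_forward_characteristic
    (hl : DifferentiableOn ℝ (uncurry l) (Icc 0 t ×ˢ univ))
    (hlt : ∀ s ∈ Ioo 0 t, ∀ x,
      deriv (fun u => l u x) s - k (r s x - l s x) * deriv (fun y => l s y) x = 0)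
    (hxt : ∀ a, ∀ s ∈ Ioo 0 t,
      HasDerivAt (fun u => x₁ u a) (k (r s (x₁ s a) - l s (x₁ s a))) s)
    (hrx : ∀ a, ∀ s ∈ Icc 0 t, r s (x₁ s a) = r₀ a) (α : ℝ) {s : ℝ} (hs : s ∈ Ioo 0 t) :
    HasDerivAt (fun u => r₀ α - l u (x₁ u α))
      (-(2 * k (r₀ α - l s (x₁ s α)) * deriv (fun y => l s y) (x₁ s α))) s := by
  have hlx := hasDerivAt_comp_curve
    (hl.differentiableAt (prod_mem_nhds (Icc_mem_nhds hs.1 hs.2) univ_mem)) (hxt α s hs)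
  have hlts := hlt s hs (x₁ s α)
  rw [hrx α s (Ioo_subset_Icc_self hs)] at hlx hlts
  exact (hlx.const_sub (r₀ α)).congr_deriv (by linarith)

theorem deriv_forward_characteristic_eq (ht : 0 ≤ t) (hk : ContDiff ℝ 1 k)
    (hkpos : ∀ η, 0 < k η)
    (hr : ContDiffOn ℝ 1 (uncurry r) (Icc 0 t ×ˢ univ))
    (hl : ContDiffOn ℝ 1 (uncurry l) (Icc 0 t ×ˢ univ))
    (hrt : ∀ s ∈ Ioo 0 t, ∀ x,
      deriv (fun u => r u x) s + k (r s x - l s x) * deriv (fun y => r s y) x = 0)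
    (hlt : ∀ s ∈ Ioo 0 t, ∀ x,
      deriv (fun u => l u x) s - k (r s x - l s x) * deriv (fun y => l s y) x = 0)
    (hr0 : ∀ x, r 0 x = r₀ x) (hl0 : ∀ x, l 0 x = -r₀ x)
    (hx : ContDiffOn ℝ 1 (uncurry x₁) (Icc 0 t ×ˢ univ))
    (hxt : ∀ a, ∀ s ∈ Ioo 0 t,
      HasDerivAt (fun u => x₁ u a) (k (r s (x₁ s a) - l s (x₁ s a))) s)
    (hx0 : ∀ a, x₁ 0 a = a) (α : ℝ) :
    deriv (fun a => x₁ t a) α =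
      √(k (r₀ α - l t (x₁ t α)) / k (2 * r₀ α)) *
        (1 + deriv r₀ α * √(k (2 * r₀ α)) * ∫ τ in 0..t, fk k (r₀ α - l τ (x₁ τ α))) := by
  have hη0 : r₀ α - l 0 (x₁ 0 α) = 2 * r₀ α := by rw [hx0, hl0]; ring
  obtain rfl | ht := ht.eq_or_lt
  · rw [hη0, div_self (hkpos _).ne']
    simp [hx0]
  have hrx : ∀ a, ∀ s ∈ Icc 0 t, r s (x₁ s a) = r₀ a := fun a s hs => by
    rw [transport_eq_along_curve (hr.differentiableOn one_ne_zero)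
      (hx.continuousOn.restrict_snd_const a) (hxt a) (fun s hs => hrt s hs _) s hs, hx0, hr0]
  have hcc : ContinuousOn (fun u => deriv (fun a => x₁ u a) α) (Icc 0 t) :=
    (continuousOn_deriv_partial_snd (uniqueDiffOn_Icc ht) hx).restrict_snd_const α
  have hηc : ContinuousOn (fun u => r₀ α - l u (x₁ u α)) (Icc 0 t) :=
    continuousOn_const.sub
      ((hl.continuousOn.comp_partial_snd hx.continuousOn).restrict_snd_const α)
  have := eq_of_hasDerivAt_compression ht.le hk hkpos hcc hηc
    (fun s => hasDerivAt_forward_compression_ratio ht hk hr hl hx hxt hx0 hrx α)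
    (fun s => hasDerivAt_sub_l_along_forward_characteristic
      (hl.differentiableOn one_ne_zero) hlt hxt hrx α)
  rw [hη0] at this
  simpa [hx0] using this

theorem deriv_backward_characteristic_eq {x₂ : ℝ → ℝ → ℝ} (ht : 0 ≤ t) (hk : ContDiff ℝ 1 k)
    (hkpos : ∀ η, 0 < k η)
    (hr : ContDiffOn ℝ 1 (uncurry r) (Icc 0 t ×ˢ univ))
    (hl : ContDiffOn ℝ 1 (uncurry l) (Icc 0 t ×ˢ univ))
    (hrt : ∀ s ∈ Ioo 0 t, ∀ x,
      deriv (fun u => r u x) s + k (r s x - l s x) * deriv (fun y => r s y) x = 0)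
    (hlt : ∀ s ∈ Ioo 0 t, ∀ x,
      deriv (fun u => l u x) s - k (r s x - l s x) * deriv (fun y => l s y) x = 0)
    (hr0 : ∀ x, r 0 x = r₀ x) (hl0 : ∀ x, l 0 x = -r₀ x)
    (hx : ContDiffOn ℝ 1 (uncurry x₂) (Icc 0 t ×ˢ univ))
    (hxt : ∀ b, ∀ s ∈ Ioo 0 t,
      HasDerivAt (fun u => x₂ u b) (-k (r s (x₂ s b) - l s (x₂ s b))) s)
    (hx0 : ∀ b, x₂ 0 b = b) (β : ℝ) :
    deriv (fun b => x₂ t b) β =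
      √(k (r t (x₂ t β) - (-r₀ β)) / k (2 * r₀ β)) *
        (1 + deriv (fun y => -r₀ y) β * √(k (2 * r₀ β)) *
          ∫ τ in 0..t, fk k (r τ (x₂ τ β) - (-r₀ β))) := by
  have hrefl {f : ℝ → ℝ → ℝ} (hf : ContDiffOn ℝ 1 (uncurry f) (Icc 0 t ×ˢ univ)) :
      ContDiffOn ℝ 1 (uncurry fun τ x => -f τ (-x)) (Icc 0 t ×ˢ univ) :=
    (hf.comp (contDiff_fst.prodMk contDiff_snd.neg).contDiffOn fun _ hp => ⟨hp.1, trivial⟩).neg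
  have hdx (f : ℝ → ℝ → ℝ) (s x : ℝ) :
      deriv (fun y => -f s (-y)) x = deriv (fun y => f s y) (-x) := by
    rw [deriv.fun_neg, deriv_comp_neg, neg_neg]
  have H := deriv_forward_characteristic_eq (r := fun τ x => -l τ (-x))
    (l := fun τ x => -r τ (-x)) (r₀ := fun x => r₀ (-x)) (x₁ := fun τ b => -x₂ τ (-b))
    ht hk hkpos (hrefl hl) (hrefl hr) ?_ ?_ (fun x => by simp [hl0]) (fun x => by simp [hr0])
    (hrefl hx) ?_ (fun b => by simp [hx0]) (-β)
  · simp only [neg_neg, hdx, deriv_comp_neg] at H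
    have hswap : ∀ τ y, r τ y - -r₀ β = r₀ β - -r τ y := fun _ _ => by ring
    simpa only [hswap, deriv.fun_neg] using H
  · intro s hs x
    rw [deriv.fun_neg, hdx, neg_sub_neg]
    linarith [hlt s hs (-x)]
  · intro s hs x
    rw [deriv.fun_neg, hdx, neg_sub_neg]
    linarith [hrt s hs (-x)]
  · intro b s hs
    simpa only [neg_neg, neg_sub_neg] using (hxt (-b) s hs).fun_neg

end RiemannInvariants

theorem infinitesimal_compression_ratios_formulae_general
    (tstar : EReal)
    (k : ℝ → ℝ)
    (hk1 : ContDiff ℝ 1 k) (hkge : ∀ η, 1 ≤ k η)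
    (r l : ℝ → ℝ → ℝ)
    (hrl : ContDiffOn ℝ 1 (fun p : ℝ × ℝ => (r p.1 p.2, l p.1 p.2))
      {p : ℝ × ℝ | 0 ≤ p.1 ∧ (p.1 : EReal) < tstar})
    (hsys : ∀ t x : ℝ, 0 ≤ t → (t : EReal) < tstar →
      deriv (fun s => r s x) t + k (r t x - l t x) * deriv (fun y => r t y) x = 0 ∧
      deriv (fun s => l s x) t - k (r t x - l t x) * deriv (fun y => l t y) x = 0)
    (r₀ : ℝ → ℝ)
    (hir : ∀ x, r 0 x = r₀ x) (hil : ∀ x, l 0 x = -(r₀ x))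
    (x₁ x₂ : ℝ → ℝ → ℝ)
    (hx₁ode : ∀ (α t : ℝ), 0 ≤ t → (t : EReal) < tstar →
      HasDerivAt (fun s => x₁ s α) (k (r t (x₁ t α) - l t (x₁ t α))) t)
    (hx₁0 : ∀ α, x₁ 0 α = α)
    (hx₂ode : ∀ (β t : ℝ), 0 ≤ t → (t : EReal) < tstar →
      HasDerivAt (fun s => x₂ s β) (-(k (r t (x₂ t β) - l t (x₂ t β)))) t)
    (hx₂0 : ∀ β, x₂ 0 β = β)
    (hx₁C : ContDiffOn ℝ 1 (fun p : ℝ × ℝ => x₁ p.1 p.2)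
      {p : ℝ × ℝ | 0 ≤ p.1 ∧ (p.1 : EReal) < tstar})
    (hx₂C : ContDiffOn ℝ 1 (fun p : ℝ × ℝ => x₂ p.1 p.2)
      {p : ℝ × ℝ | 0 ≤ p.1 ∧ (p.1 : EReal) < tstar}) :
    ∀ t α β : ℝ, 0 ≤ t → (t : EReal) < tstar →
      deriv (fun a => x₁ t a) α =
        Real.sqrt (k (r₀ α - l t (x₁ t α)) / k (2 * r₀ α)) *
          (1 + deriv r₀ α * Real.sqrt (k (2 * r₀ α)) *
            ∫ τ in (0 : ℝ)..t, fk k (r₀ α - l τ (x₁ τ α))) ∧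
      deriv (fun b => x₂ t b) β =
        Real.sqrt (k (r t (x₂ t β) - (-(r₀ β))) / k (2 * r₀ β)) *
          (1 + deriv (fun y => -(r₀ y)) β * Real.sqrt (k (2 * r₀ β)) *
            ∫ τ in (0 : ℝ)..t, fk k (r τ (x₂ τ β) - (-(r₀ β)))) := by
  intro t α β ht htT
  have hslab : Icc 0 t ×ˢ univ ⊆ {p : ℝ × ℝ | 0 ≤ p.1 ∧ (p.1 : EReal) < tstar} :=
    fun p hp => ⟨hp.1.1, (EReal.coe_le_coe_iff.2 hp.1.2).trans_lt htT⟩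
  have hsT : ∀ s ∈ Ioo 0 t, (s : EReal) < tstar :=
    fun s hs => (EReal.coe_lt_coe_iff.2 hs.2).trans htT
  have hkpos : ∀ η, 0 < k η := fun η => one_pos.trans_le (hkge η)
  have hr : ContDiffOn ℝ 1 (uncurry r) (Icc 0 t ×ˢ univ) :=
    (contDiff_fst.comp_contDiffOn hrl).mono hslab
  have hl : ContDiffOn ℝ 1 (uncurry l) (Icc 0 t ×ˢ univ) :=
    (contDiff_snd.comp_contDiffOn hrl).mono hslab
  have hrt := fun s hs x => (hsys s x (le_of_lt hs.1) (hsT s hs)).1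
  have hlt := fun s hs x => (hsys s x (le_of_lt hs.1) (hsT s hs)).2
  exact ⟨deriv_forward_characteristic_eq ht hk1 hkpos hr hl hrt hlt hir hil (hx₁C.mono hslab)
      (fun a s hs => hx₁ode a s hs.1.le (hsT s hs)) hx₁0 α,
    deriv_backward_characteristic_eq ht hk1 hkpos hr hl hrt hlt hir hil (hx₂C.mono hslab)
      (fun b s hs => hx₂ode b s hs.1.le (hsT s hs)) hx₂0 β⟩

/-- explicit formulae for the infinitesimal compression ratios
`c₁ = ∂x₁/∂α` and `c₂ = ∂x₂/∂β` of the forward and backward characteristic families of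
the diagonal Riemann-invariant system. -/
theorem infinitesimal_compression_ratios_formulae
    (tstar : EReal) (htstar : 0 < tstar)
    (k : ℝ → ℝ) (hk : ∀ u : ℝ, k (-(2 * L u)) = Real.sqrt (1 + u ^ 2))
    (hk1 : ContDiff ℝ 1 k) (hkge : ∀ η, 1 ≤ k η)
    (r l : ℝ → ℝ → ℝ)
    (hrl : ContDiffOn ℝ 1 (fun p : ℝ × ℝ => (r p.1 p.2, l p.1 p.2))
      {p : ℝ × ℝ | 0 ≤ p.1 ∧ (p.1 : EReal) < tstar})
    (hsys : ∀ t x : ℝ, 0 ≤ t → (t : EReal) < tstar →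
      deriv (fun s => r s x) t + k (r t x - l t x) * deriv (fun y => r t y) x = 0 ∧
      deriv (fun s => l s x) t - k (r t x - l t x) * deriv (fun y => l t y) x = 0)
    (r₀ : ℝ → ℝ) (hr₀ : ContDiff ℝ 1 r₀)
    (hir : ∀ x, r 0 x = r₀ x) (hil : ∀ x, l 0 x = -(r₀ x))
    (x₁ x₂ : ℝ → ℝ → ℝ)
    (hx₁ode : ∀ (α t : ℝ), 0 ≤ t → (t : EReal) < tstar →
      HasDerivAt (fun s => x₁ s α) (k (r t (x₁ t α) - l t (x₁ t α))) t)
    (hx₁0 : ∀ α, x₁ 0 α = α)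
    (hx₂ode : ∀ (β t : ℝ), 0 ≤ t → (t : EReal) < tstar →
      HasDerivAt (fun s => x₂ s β) (-(k (r t (x₂ t β) - l t (x₂ t β)))) t)
    (hx₂0 : ∀ β, x₂ 0 β = β)
    (hx₁C : ContDiffOn ℝ 1 (fun p : ℝ × ℝ => x₁ p.1 p.2)
      {p : ℝ × ℝ | 0 ≤ p.1 ∧ (p.1 : EReal) < tstar})
    (hx₂C : ContDiffOn ℝ 1 (fun p : ℝ × ℝ => x₂ p.1 p.2)
      {p : ℝ × ℝ | 0 ≤ p.1 ∧ (p.1 : EReal) < tstar})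
    (hx₁mix : ContinuousOn
      (fun p : ℝ × ℝ => deriv (fun s => deriv (fun a => x₁ s a) p.2) p.1)
      {p : ℝ × ℝ | 0 ≤ p.1 ∧ (p.1 : EReal) < tstar})
    (hx₂mix : ContinuousOn
      (fun p : ℝ × ℝ => deriv (fun s => deriv (fun b => x₂ s b) p.2) p.1)
      {p : ℝ × ℝ | 0 ≤ p.1 ∧ (p.1 : EReal) < tstar}) :
    ∀ t α β : ℝ, 0 ≤ t → (t : EReal) < tstar →
      deriv (fun a => x₁ t a) α =
        Real.sqrt (k (r₀ α - l t (x₁ t α)) / k (2 * r₀ α)) *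
          (1 + deriv r₀ α * Real.sqrt (k (2 * r₀ α)) *
            ∫ τ in (0 : ℝ)..t, fk k (r₀ α - l τ (x₁ τ α))) ∧
      deriv (fun b => x₂ t b) β =
        Real.sqrt (k (r t (x₂ t β) - (-(r₀ β))) / k (2 * r₀ β)) *
          (1 + deriv (fun y => -(r₀ y)) β * Real.sqrt (k (2 * r₀ β)) *
            ∫ τ in (0 : ℝ)..t, fk k (r τ (x₂ τ β) - (-(r₀ β)))) :=
  infinitesimal_compression_ratios_formulae_general tstar k hk1 hkge r l hrl hsys r₀ hir hil x₁ x₂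
    hx₁ode hx₁0 hx₂ode hx₂0 hx₁C hx₂C
end

section
/- Let t* ∈ (0,∞], let (r,ℓ) be a C¹ solution on [0,t*)×ℝ of the diagonal system ∂ₜr + k(r−ℓ)·∂ₓr = 0, ∂ₜℓ − k(r−ℓ)·∂ₓℓ = 0 with initial data r(0,·) = r₀, ℓ(0,·) = −r₀, where r₀ is C¹, and let x₁, x₂ be C¹ forward and backward characteristic families (∂ₜx₁(t,α) = k(r−ℓ)(t,x₁(t,α)), x₁(0,α) = α; ∂ₜx₂(t,β) = −k(r−ℓ)(t,x₂(t,β)), x₂(0,β) = β) with continuous mixed second partial derivatives. Then the infinitesimal compression ratios are strictly positive on the whole maximal interval: c₁(t,α) := ∂x₁/∂α(t,α) > 0 and c₂(t,β) := ∂x₂/∂β(t,β) > 0 for every t ∈ [0,t*) and every α, β ∈ ℝ. -/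
open Filter

/-!
Differentiating the integral form `x t α = α + ∫₀ᵗ Λ (s, x s α) ds` of a characteristic
under the integral sign shows that `c = ∂x/∂α` solves the linear Volterra equation
`c t = 1 + ∫₀ᵗ ∂ₓΛ (s, x s α) · c s ds`, whose only continuous solution is
`c t = exp (∫₀ᵗ ∂ₓΛ (s, x s α) ds) > 0`.
-/

open Set MeasureTheory intervalIntegral Real

section PartialDerivSnd

variable {E : Type*} [NormedAddCommGroup E] [NormedSpace ℝ E] {I : Set ℝ} {F : ℝ × ℝ → E}

theorem DifferentiableOn.hasDerivAt_snd (hF : DifferentiableOn ℝ F (I ×ˢ univ)) {t u : ℝ}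
    (ht : t ∈ I) :
    HasDerivAt (fun y => F (t, y)) (fderivWithin ℝ F (I ×ˢ univ) (t, u) (0, 1)) u := by
  have hline : HasDerivAt (fun y : ℝ => (t, y)) ((0 : ℝ), (1 : ℝ)) u :=
    (hasDerivAt_const u t).prodMk (hasDerivAt_id u)
  have := (hF (t, u) ⟨ht, trivial⟩).hasFDerivWithinAt.comp_hasDerivWithinAt u
    (hline.hasDerivWithinAt (s := univ)) fun y _ => (⟨ht, trivial⟩ : (t, y) ∈ I ×ˢ univ)
  rwa [hasDerivWithinAt_univ] at this

theorem ContDiffOn.continuousOn_deriv_snd (hI : UniqueDiffOn ℝ I)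
    (hF : ContDiffOn ℝ 1 F (I ×ˢ univ)) :
    ContinuousOn (fun p : ℝ × ℝ => deriv (fun y => F (p.1, y)) p.2) (I ×ˢ univ) := by
  have hfderiv := (hF.continuousOn_fderivWithin (hI.prod uniqueDiffOn_univ) le_rfl).clm_apply
    (continuousOn_const (c := ((0 : ℝ), (1 : ℝ))))
  refine hfderiv.congr fun p hp => ?_
  exact ((hF.differentiableOn one_ne_zero).hasDerivAt_snd hp.1).deriv

theorem hasDerivAt_integral_of_contDiffOn_Icc_prod [CompleteSpace E] {a b : ℝ} (hab : a < b)
    (hF : ContDiffOn ℝ 1 F (Icc a b ×ˢ univ)) {t : ℝ} (ht : t ∈ Icc a b) (α₀ : ℝ) :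
    HasDerivAt (fun α => ∫ s in a..t, F (s, α))
      (∫ s in a..t, deriv (fun y => F (s, y)) α₀) α₀ := by
  have hsub : uIcc a t ⊆ Icc a b := uIcc_subset_Icc (left_mem_Icc.2 hab.le) ht
  have hF' := hF.continuousOn_deriv_snd (uniqueDiffOn_Icc hab)
  obtain ⟨C, hC⟩ := (isCompact_Icc.prod (isCompact_closedBall α₀ 1)).exists_bound_of_continuousOn
    (hF'.mono (prod_mono le_rfl (subset_univ _)))
  have hline : ∀ α : ℝ, ContinuousOn (fun s : ℝ => (s, α)) (uIcc a t) :=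
    fun α => (continuous_id.prodMk continuous_const).continuousOn
  have hmaps : ∀ α : ℝ, MapsTo (fun s : ℝ => (s, α)) (uIcc a t) (Icc a b ×ˢ univ) :=
    fun α s hs => ⟨hsub hs, trivial⟩
  refine (hasDerivAt_integral_of_dominated_loc_of_deriv_le
    (F := fun α s => F (s, α)) (F' := fun α s => deriv (fun y => F (s, y)) α) (bound := fun _ => C)
    (Metric.ball_mem_nhds α₀ one_pos) (Eventually.of_forall fun α => ?_) ?_ ?_
    (ae_of_all _ fun s hs α hα => hC (s, α) ⟨hsub (uIoc_subset_uIcc hs), Metric.ball_subset_closedBall hα⟩)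
    (intervalIntegrable_const (c := C))
    (ae_of_all _ fun s hs α _ => (hF.differentiableOn one_ne_zero).hasDerivAt_snd
      (hsub (uIoc_subset_uIcc hs)) |>.differentiableAt.hasDerivAt)).2
  · exact ((hF.continuousOn.comp (hline α) (hmaps α)).mono uIoc_subset_uIcc).aestronglyMeasurable
      measurableSet_uIoc
  · exact (hF.continuousOn.comp (hline α₀) (hmaps α₀)).intervalIntegrable
  · exact ((hF'.comp (hline α₀) (hmaps α₀)).mono uIoc_subset_uIcc).aestronglyMeasurable
      measurableSet_uIoc

end PartialDerivSnd

theorem eq_exp_integral_of_eq_one_add_integral_of_continuous {a g : ℝ → ℝ} {T : ℝ}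
    (ha : Continuous a) (hg : Continuous g)
    (hvol : ∀ t ∈ Icc 0 T, g t = 1 + ∫ s in 0..t, a s * g s) {t : ℝ} (ht : t ∈ Icc 0 T) :
    g t = exp (∫ s in 0..t, a s) := by
  set H := fun u => ∫ s in 0..u, a s
  set G := fun u => 1 + ∫ s in 0..u, a s * g s
  have hE : ∀ u ∈ Icc 0 T, HasDerivAt (fun u => G u * exp (-H u)) 0 u := by
    intro u hu
    have hH : HasDerivAt H (a u) u := (ha.integral_hasStrictDerivAt 0 u).hasDerivAt
    have hG : HasDerivAt G (a u * g u) u :=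
      ((ha.mul hg).integral_hasStrictDerivAt 0 u).hasDerivAt.const_add 1
    refine (hG.mul hH.neg.exp).congr_deriv ?_
    rw [show G u = g u from (hvol u hu).symm]
    ring
  have hconst := constant_of_has_deriv_right_zero
    (fun u hu => (hE u hu).continuousAt.continuousWithinAt)
    (fun u hu => (hE u (Ico_subset_Icc_self hu)).hasDerivWithinAt) t ht
  simp only [G, H, integral_same, add_zero, neg_zero, exp_zero, mul_one, exp_neg] at hconst
  rwa [hvol t ht, ← mul_inv_eq_one₀ (exp_ne_zero _)]

theorem eq_exp_integral_of_eq_one_add_integral {a g : ℝ → ℝ} {T : ℝ}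
    (ha : ContinuousOn a (Icc 0 T)) (hg : ContinuousOn g (Icc 0 T))
    (hvol : ∀ t ∈ Icc 0 T, g t = 1 + ∫ s in 0..t, a s * g s) {t : ℝ} (ht : t ∈ Icc 0 T) :
    g t = exp (∫ s in 0..t, a s) := by
  have hT : 0 ≤ T := ht.1.trans ht.2
  set proj : ℝ → ℝ := fun s => projIcc 0 T hT s
  have hproj : Continuous proj := continuous_subtype_val.comp continuous_projIcc
  have hproj_eq : ∀ {u}, u ∈ Icc 0 T → ∀ s ∈ uIcc 0 u, proj s = s := fun hu s hs =>
    congrArg Subtype.val (projIcc_of_mem hT (uIcc_subset_Icc (left_mem_Icc.2 hT) hu hs))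
  have key := eq_exp_integral_of_eq_one_add_integral_of_continuous (T := T)
    (ha.comp_continuous hproj fun s => (projIcc 0 T hT s).2)
    (hg.comp_continuous hproj fun s => (projIcc 0 T hT s).2) (fun u hu => ?_) ht
  · simpa only [Function.comp_apply, hproj_eq ht t right_mem_uIcc,
      integral_congr fun s hs => congrArg a (hproj_eq ht s hs)] using key
  · simp only [Function.comp_apply, hproj_eq hu u right_mem_uIcc]
    rw [hvol u hu]
    congr 1
    exact integral_congr fun s hs => by simp only [hproj_eq hu s hs]

section CharacteristicFlow

variable {T : ℝ} {Λ : ℝ × ℝ → ℝ} {x : ℝ → ℝ → ℝ}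

theorem flow_eq_add_integral (hΛ : ContinuousOn Λ (Icc 0 T ×ˢ univ)) (hx0 : ∀ α, x 0 α = α)
    (hode : ∀ α, ∀ t ∈ Icc 0 T, HasDerivAt (fun s => x s α) (Λ (t, x t α)) t)
    {t : ℝ} (ht : t ∈ Icc 0 T) (α : ℝ) :
    x t α = α + ∫ s in 0..t, Λ (s, x s α) := by
  have hsub : uIcc 0 t ⊆ Icc 0 T := uIcc_subset_Icc (left_mem_Icc.2 (ht.1.trans ht.2)) ht
  have hxα : ContinuousOn (fun s => x s α) (Icc 0 T) :=
    fun s hs => (hode α s hs).continuousAt.continuousWithinAt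
  have hint : IntervalIntegrable (fun s => Λ (s, x s α)) volume 0 t :=
    ((hΛ.comp (continuousOn_id.prodMk hxα) fun s hs => ⟨hs, trivial⟩).mono hsub).intervalIntegrable
  rw [integral_eq_sub_of_hasDerivAt (fun s hs => hode α s (hsub hs)) hint, hx0]
  ring

theorem deriv_flow_eq_one_add_integral_s8 (hT : 0 < T) (hΛ : ContDiffOn ℝ 1 Λ (Icc 0 T ×ˢ univ))
    (hx : ContDiffOn ℝ 1 (fun p : ℝ × ℝ => x p.1 p.2) (Icc 0 T ×ˢ univ)) (hx0 : ∀ α, x 0 α = α)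
    (hode : ∀ α, ∀ t ∈ Icc 0 T, HasDerivAt (fun s => x s α) (Λ (t, x t α)) t)
    {t : ℝ} (ht : t ∈ Icc 0 T) (α : ℝ) :
    deriv (x t) α = 1 + ∫ s in 0..t, deriv (fun y => Λ (s, y)) (x s α) * deriv (x s) α := by
  have hΦ : ContDiffOn ℝ 1 (fun p : ℝ × ℝ => Λ (p.1, x p.1 p.2)) (Icc 0 T ×ˢ univ) :=
    hΛ.comp (contDiffOn_fst.prodMk hx) fun p hp => ⟨hp.1, trivial⟩
  have hrep : x t = fun α => α + ∫ s in 0..t, Λ (s, x s α) :=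
    funext (flow_eq_add_integral hΛ.continuousOn hx0 hode ht)
  have hderiv : HasDerivAt (fun α => α + ∫ s in 0..t, Λ (s, x s α))
      (1 + ∫ s in 0..t, deriv (fun y => Λ (s, x s y)) α) α :=
    (hasDerivAt_id α).add (hasDerivAt_integral_of_contDiffOn_Icc_prod hT hΦ ht α)
  rw [hrep, hderiv.deriv]
  congr 1
  refine integral_congr fun s hs => ?_
  replace hs : s ∈ Icc 0 T := uIcc_subset_Icc (left_mem_Icc.2 hT.le) ht hs
  exact deriv_comp (h₂ := fun y => Λ (s, y)) α
    ((hΛ.differentiableOn one_ne_zero).hasDerivAt_snd hs).differentiableAt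
    ((hx.differentiableOn one_ne_zero).hasDerivAt_snd hs).differentiableAt

theorem deriv_flow_pos (hT : 0 < T) (hΛ : ContDiffOn ℝ 1 Λ (Icc 0 T ×ˢ univ))
    (hx : ContDiffOn ℝ 1 (fun p : ℝ × ℝ => x p.1 p.2) (Icc 0 T ×ˢ univ)) (hx0 : ∀ α, x 0 α = α)
    (hode : ∀ α, ∀ t ∈ Icc 0 T, HasDerivAt (fun s => x s α) (Λ (t, x t α)) t)
    {t : ℝ} (ht : t ∈ Icc 0 T) (α : ℝ) :
    0 < deriv (x t) α := by
  have hU : UniqueDiffOn ℝ (Icc 0 T) := uniqueDiffOn_Icc hT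
  have hline : MapsTo (fun s : ℝ => (s, α)) (Icc 0 T) (Icc 0 T ×ˢ univ) :=
    fun s hs => ⟨hs, trivial⟩
  have hxα : ContinuousOn (fun s => x s α) (Icc 0 T) :=
    hx.continuousOn.comp (continuousOn_id.prodMk continuousOn_const) hline
  have ha : ContinuousOn (fun s => deriv (fun y => Λ (s, y)) (x s α)) (Icc 0 T) :=
    (hΛ.continuousOn_deriv_snd hU).comp (continuousOn_id.prodMk hxα) fun s hs => ⟨hs, trivial⟩
  have hc : ContinuousOn (fun s => deriv (x s) α) (Icc 0 T) :=
    (hx.continuousOn_deriv_snd hU).comp (continuousOn_id.prodMk continuousOn_const) hline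
  rw [eq_exp_integral_of_eq_one_add_integral ha hc
    (fun s hs => deriv_flow_eq_one_add_integral_s8 hT hΛ hx hx0 hode hs α) ht]
  exact exp_pos _

end CharacteristicFlow

theorem infinitesimal_compression_ratios_pos_general
    (tstar : EReal)
    (k : ℝ → ℝ)
    (hk1 : ContDiff ℝ 1 k)
    (r l : ℝ → ℝ → ℝ)
    (hrl : ContDiffOn ℝ 1 (fun p : ℝ × ℝ => (r p.1 p.2, l p.1 p.2))
      {p : ℝ × ℝ | 0 ≤ p.1 ∧ (p.1 : EReal) < tstar})
    (x₁ x₂ : ℝ → ℝ → ℝ)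
    (hx₁ode : ∀ (α t : ℝ), 0 ≤ t → (t : EReal) < tstar →
      HasDerivAt (fun s => x₁ s α) (k (r t (x₁ t α) - l t (x₁ t α))) t)
    (hx₁0 : ∀ α, x₁ 0 α = α)
    (hx₂ode : ∀ (β t : ℝ), 0 ≤ t → (t : EReal) < tstar →
      HasDerivAt (fun s => x₂ s β) (-(k (r t (x₂ t β) - l t (x₂ t β)))) t)
    (hx₂0 : ∀ β, x₂ 0 β = β)
    (hx₁C : ContDiffOn ℝ 1 (fun p : ℝ × ℝ => x₁ p.1 p.2)
      {p : ℝ × ℝ | 0 ≤ p.1 ∧ (p.1 : EReal) < tstar})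
    (hx₂C : ContDiffOn ℝ 1 (fun p : ℝ × ℝ => x₂ p.1 p.2)
      {p : ℝ × ℝ | 0 ≤ p.1 ∧ (p.1 : EReal) < tstar}) :
    ∀ t α β : ℝ, 0 ≤ t → (t : EReal) < tstar →
      0 < deriv (fun a => x₁ t a) α ∧ 0 < deriv (fun b => x₂ t b) β := by
  intro t α β ht₀ ht
  -- `t < T` strictly keeps `0 < T`, so that one-sided derivatives on `[0, T]` are unique
  obtain ⟨T, htT, hT⟩ := EReal.lt_iff_exists_real_btwn.mp ht
  replace htT : t < T := EReal.coe_lt_coe_iff.mp htT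
  have hsub : Icc 0 T ×ˢ univ ⊆ {p : ℝ × ℝ | 0 ≤ p.1 ∧ (p.1 : EReal) < tstar} :=
    fun p hp => ⟨hp.1.1, (EReal.coe_le_coe_iff.mpr hp.1.2).trans_lt hT⟩
  have hspeed : ContDiffOn ℝ 1 (fun p : ℝ × ℝ => k (r p.1 p.2 - l p.1 p.2)) (Icc 0 T ×ˢ univ) :=
    hk1.comp_contDiffOn (((contDiff_fst.sub contDiff_snd).comp_contDiffOn hrl).mono hsub)
  have hT₀ : 0 < T := ht₀.trans_lt htT
  have ht' : t ∈ Icc 0 T := ⟨ht₀, htT.le⟩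
  exact ⟨deriv_flow_pos hT₀ hspeed (hx₁C.mono hsub) hx₁0
      (fun α s hs => hx₁ode α s hs.1 (hsub (mk_mem_prod hs (mem_univ α))).2) ht' α,
    deriv_flow_pos hT₀ hspeed.neg (hx₂C.mono hsub) hx₂0
      (fun β s hs => hx₂ode β s hs.1 (hsub (mk_mem_prod hs (mem_univ β))).2) ht' β⟩

/-- strict positivity of the infinitesimal compression ratios
`c₁ = ∂x₁/∂α` and `c₂ = ∂x₂/∂β` of the characteristic families of
the diagonal Riemann-invariant system. -/
theorem infinitesimal_compression_ratios_pos
    (tstar : EReal) (htstar : 0 < tstar)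
    (k : ℝ → ℝ) (hk : ∀ u : ℝ, k (-(2 * L u)) = Real.sqrt (1 + u ^ 2))
    (hk1 : ContDiff ℝ 1 k) (hkge : ∀ η, 1 ≤ k η)
    (r l : ℝ → ℝ → ℝ)
    (hrl : ContDiffOn ℝ 1 (fun p : ℝ × ℝ => (r p.1 p.2, l p.1 p.2))
      {p : ℝ × ℝ | 0 ≤ p.1 ∧ (p.1 : EReal) < tstar})
    (hsys : ∀ t x : ℝ, 0 ≤ t → (t : EReal) < tstar →
      deriv (fun s => r s x) t + k (r t x - l t x) * deriv (fun y => r t y) x = 0 ∧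
      deriv (fun s => l s x) t - k (r t x - l t x) * deriv (fun y => l t y) x = 0)
    (r₀ : ℝ → ℝ) (hr₀ : ContDiff ℝ 1 r₀)
    (hir : ∀ x, r 0 x = r₀ x) (hil : ∀ x, l 0 x = -(r₀ x))
    (x₁ x₂ : ℝ → ℝ → ℝ)
    (hx₁ode : ∀ (α t : ℝ), 0 ≤ t → (t : EReal) < tstar →
      HasDerivAt (fun s => x₁ s α) (k (r t (x₁ t α) - l t (x₁ t α))) t)
    (hx₁0 : ∀ α, x₁ 0 α = α)
    (hx₂ode : ∀ (β t : ℝ), 0 ≤ t → (t : EReal) < tstar →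
      HasDerivAt (fun s => x₂ s β) (-(k (r t (x₂ t β) - l t (x₂ t β)))) t)
    (hx₂0 : ∀ β, x₂ 0 β = β)
    (hx₁C : ContDiffOn ℝ 1 (fun p : ℝ × ℝ => x₁ p.1 p.2)
      {p : ℝ × ℝ | 0 ≤ p.1 ∧ (p.1 : EReal) < tstar})
    (hx₂C : ContDiffOn ℝ 1 (fun p : ℝ × ℝ => x₂ p.1 p.2)
      {p : ℝ × ℝ | 0 ≤ p.1 ∧ (p.1 : EReal) < tstar})
    (hx₁mix : ContinuousOn
      (fun p : ℝ × ℝ => deriv (fun s => deriv (fun a => x₁ s a) p.2) p.1)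
      {p : ℝ × ℝ | 0 ≤ p.1 ∧ (p.1 : EReal) < tstar})
    (hx₂mix : ContinuousOn
      (fun p : ℝ × ℝ => deriv (fun s => deriv (fun b => x₂ s b) p.2) p.1)
      {p : ℝ × ℝ | 0 ≤ p.1 ∧ (p.1 : EReal) < tstar}) :
    ∀ t α β : ℝ, 0 ≤ t → (t : EReal) < tstar →
      0 < deriv (fun a => x₁ t a) α ∧ 0 < deriv (fun b => x₂ t b) β :=
  infinitesimal_compression_ratios_pos_general tstar k hk1 r l hrl x₁ x₂ hx₁ode hx₁0 hx₂ode hx₂0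
    hx₁C hx₂C
end

section
/- Let κ > 0 and ζ > 0, and define r₀ : ℝ → ℝ by r₀(x) = L( (2κζ/π) / (x² + ζ²) ), corresponding to the kink initial twist profile w₀(x) = −(2κ/π)·arctan(x/ζ). Then: r₀ is an even function; r₀(x) > 0 for every x ∈ ℝ; lim_{x→+∞} r₀(x) = 0; and r₀'(α) < 0 for every α > 0. Consequently, for every α > 0 the breakdown condition r₀'(α)·( r₀(α) + lim_{x→+∞} r₀(x) ) < 0 holds. -/
open Filter

theorem hasDerivAt_L (u : ℝ) : HasDerivAt L (Real.sqrt (1 + u ^ 2)) u := by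
  have hpos : 0 < 1 + u ^ 2 := by positivity
  have hinner : HasDerivAt (fun u : ℝ => 1 + u ^ 2) (2 * u) u := by
    simpa using (hasDerivAt_pow 2 u).const_add 1
  have hsqrt : HasDerivAt (fun u : ℝ => Real.sqrt (1 + u ^ 2))
      (1 / (2 * Real.sqrt (1 + u ^ 2)) * (2 * u)) u :=
    (Real.hasDerivAt_sqrt hpos.ne').comp u hinner
  refine ((((hasDerivAt_id u).mul hsqrt).add (Real.hasDerivAt_arsinh u)).div_const 2).congr_deriv ?_
  have hsq : Real.sqrt (1 + u ^ 2) ^ 2 = 1 + u ^ 2 := Real.sq_sqrt hpos.le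
  field_simp
  simp only [id, hsq]
  ring

theorem continuous_L : Continuous L :=
  continuous_iff_continuousAt.2 fun u => (hasDerivAt_L u).continuousAt

theorem strictMono_L : StrictMono L :=
  strictMono_of_hasDerivAt_pos hasDerivAt_L fun _ => Real.sqrt_pos.2 (by positivity)

@[simp]
theorem L_zero : L 0 = 0 := by simp [L]

theorem L_pos {u : ℝ} (hu : 0 < u) : 0 < L u :=
  L_zero ▸ strictMono_L hu

theorem HasDerivAt.L_comp {g : ℝ → ℝ} {g' x : ℝ} (hg : HasDerivAt g g' x) :
    HasDerivAt (fun y => L (g y)) (Real.sqrt (1 + g x ^ 2) * g') x :=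
  (hasDerivAt_L (g x)).comp x hg

theorem hasDerivAt_div_sq_add_sq (c ζ : ℝ) {x : ℝ} (hx : x ^ 2 + ζ ^ 2 ≠ 0) :
    HasDerivAt (fun y : ℝ => c / (y ^ 2 + ζ ^ 2)) (-(2 * c * x) / (x ^ 2 + ζ ^ 2) ^ 2) x := by
  have hden : HasDerivAt (fun y : ℝ => y ^ 2 + ζ ^ 2) (2 * x) x := by
    simpa using (hasDerivAt_pow 2 x).add_const (ζ ^ 2)
  exact ((hasDerivAt_const x c).div hden hx).congr_deriv (by ring)

theorem deriv_L_div_sq_add_sq_neg {c ζ x : ℝ} (hc : 0 < c) (hx : 0 < x) :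
    deriv (fun y : ℝ => L (c / (y ^ 2 + ζ ^ 2))) x < 0 := by
  have hden : 0 < x ^ 2 + ζ ^ 2 := by positivity
  rw [(hasDerivAt_div_sq_add_sq c ζ hden.ne').L_comp.deriv]
  exact mul_neg_of_pos_of_neg (Real.sqrt_pos.2 (by positivity))
    (div_neg_of_neg_of_pos (by nlinarith) (by positivity))

theorem tendsto_L_div_sq_add_sq_atTop (c ζ : ℝ) :
    Tendsto (fun y : ℝ => L (c / (y ^ 2 + ζ ^ 2))) atTop (nhds 0) :=
  (continuous_L.tendsto' 0 0 L_zero).comp <| tendsto_const_nhds.div_atTop <|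
    tendsto_atTop_add_const_right _ _ (tendsto_pow_atTop two_ne_zero)

/-- for the kink initial profile `w₀(x) = −(2κ/π) arctan(x/ζ)`, the initial
Riemann invariant `r₀(x) = L((2κζ/π)/(x²+ζ²))` is even, positive, tends to `0` at `+∞`,
has negative derivative for `α > 0`, and hence satisfies the breakdown condition
`r₀'(α)(r₀(α) + r₀(+∞)) < 0` for every `α > 0`. -/
theorem kink_breakdown_condition
    (κ ζ : ℝ) (hκ : 0 < κ) (hζ : 0 < ζ)
    (r₀ : ℝ → ℝ)
    (hr₀ : ∀ x : ℝ, r₀ x = L ((2 * κ * ζ / Real.pi) / (x ^ 2 + ζ ^ 2))) :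
    (∀ x : ℝ, r₀ (-x) = r₀ x) ∧
    (∀ x : ℝ, 0 < r₀ x) ∧
    Tendsto r₀ atTop (nhds 0) ∧
    (∀ α : ℝ, 0 < α → deriv r₀ α < 0) ∧
    (∀ α : ℝ, 0 < α → deriv r₀ α * (r₀ α + limUnder atTop r₀) < 0) := by
  have hc : 0 < 2 * κ * ζ / Real.pi := by positivity
  obtain rfl : r₀ = fun x => L ((2 * κ * ζ / Real.pi) / (x ^ 2 + ζ ^ 2)) := funext hr₀
  have hpos : ∀ x : ℝ, 0 < L ((2 * κ * ζ / Real.pi) / (x ^ 2 + ζ ^ 2)) :=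
    fun x => L_pos (by positivity)
  have hlim := tendsto_L_div_sq_add_sq_atTop (2 * κ * ζ / Real.pi) ζ
  have hderiv := fun α (hα : 0 < α) => deriv_L_div_sq_add_sq_neg (ζ := ζ) hc hα
  refine ⟨fun x => by simp only [even_two.neg_pow], hpos, hlim, hderiv, fun α hα => ?_⟩
  rw [hlim.limUnder_eq, add_zero]
  exact mul_neg_of_neg_of_pos (hderiv α hα) (hpos α)
end
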